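/- arXiv:1507.05297 — 3 statements merged into one kernel-verified Lean document; each statement's English description precedes it below -/
import Mathlib

section
/- There exist constants c₁, c₂ > 0, depending only on α and d, such that for every x ∈ ℤ^d and every real r ≥ 1 one has c₁ · r^d · (max(|x|, r))^α ≤ V(x,r) ≤ c₂ · r^d · (max(|x|, r))^α. -/
open scoped BigOperators

/-- ℓ∞ norm on ℤ^d, as a natural number. -/
def linf {d : ℕ} (x : Fin d → ℤ) : ℕ :=
  Finset.univ.sup fun i => (x i).natAbs

/-- ℓ¹ norm on ℤ^d, as a natural number. -/
def l1 {d : ℕ} (x : Fin d → ℤ) : ℕ :=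
  ∑ i, (x i).natAbs

/-- `ν x = (max(|x|,1))^α`. -/
noncomputable def nu (α : ℝ) {d : ℕ} (x : Fin d → ℤ) : ℝ :=
  ((max (linf x) 1 : ℕ) : ℝ) ^ α

/-- The conductance `μ x y = (max(|x|,|y|))^(-α)` if `|x-y|₁ = 1`, and `0` otherwise. -/
noncomputable def mu (α : ℝ) {d : ℕ} (x y : Fin d → ℤ) : ℝ :=
  if l1 (x - y) = 1 then ((max (linf x) (linf y) : ℕ) : ℝ) ^ (-α) else 0

/-- `z 0, …, z m` is a path: consecutive points are at ℓ¹-distance one. -/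
def IsPath {d : ℕ} (z : ℕ → Fin d → ℤ) (m : ℕ) : Prop :=
  ∀ i < m, l1 (z (i + 1) - z i) = 1

/-- The metric `ρ(x,y)`: `0` if `x = y`, otherwise the infimum of `∑ ν (z i)` over
paths from `x` to `y`. -/
noncomputable def rho (α : ℝ) {d : ℕ} (x y : Fin d → ℤ) : ℝ :=
  if x = y then 0
  else sInf {S : ℝ | ∃ (m : ℕ) (z : ℕ → Fin d → ℤ), IsPath z m ∧ z 0 = x ∧ z m = y ∧
    S = ∑ i ∈ Finset.range (m + 1), nu α (z i)}

/-- `ρ_x(r) = (max(|x|,r))^α · r`. -/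
noncomputable def rhox (α : ℝ) {d : ℕ} (x : Fin d → ℤ) (r : ℝ) : ℝ :=
  (max ((linf x : ℕ) : ℝ) r) ^ α * r

/-- `ρ_x⁻¹(r) = (max(|x|, r^{1/(1+α)}))^{-α} · r`, the inverse function of `ρ_x`. -/
noncomputable def rhoxInv (α : ℝ) {d : ℕ} (x : Fin d → ℤ) (r : ℝ) : ℝ :=
  (max ((linf x : ℕ) : ℝ) (r ^ (1 / (1 + α)))) ^ (-α) * r

/-- `V(x,r) = ν(B(x,r))`, the ν-volume of the ℓ∞-ball of radius `r` about `x`. -/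
noncomputable def V (α : ℝ) {d : ℕ} (x : Fin d → ℤ) (r : ℝ) : ℝ :=
  ∑' y : {y : Fin d → ℤ // ((linf (y - x) : ℕ) : ℝ) ≤ r}, nu α y.1

/-- `V_ρ(x,r) = ν(B_ρ(x,r))`, the ν-volume of the ρ-ball of radius `r` about `x`. -/
noncomputable def Vrho (α : ℝ) {d : ℕ} (x : Fin d → ℤ) (r : ℝ) : ℝ :=
  ∑' y : {y : Fin d → ℤ // rho α x y ≤ r}, nu α y.1

/-!
With `n = ⌊r⌋`, `V(x,r)` is the `ν`-mass of the cube of radius `n` about `x`, and `r ≍ n`.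
For the lower bound, move the centre by `n - n/3` away from the origin along the coordinate
realising `|x|`: on the cube of radius `n/3` about the new centre, which still lies in the
original cube, `|y| ≍ max(|x|, n)`. For the upper bound, if `|x| ≥ 2n` then `|y| ≍ |x|` on the
whole cube; otherwise the cube lies in the cube of radius `N = 3n` about `0`, whose mass is
`≲ N^(d+α)`. For `α ≥ 0` this is trivial; for `α < 0` bound `|y|` below by one coordinate, which
leaves the one-dimensional sum `∑_{i ≤ N} i^α ≤ N^(1+α)/(1+α)`, and this is where `α > -1` enters.
-/

open Finset Real

section Cube

variable {d : ℕ}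

lemma natAbs_le_linf (x : Fin d → ℤ) (i : Fin d) : (x i).natAbs ≤ linf x :=
  le_sup (f := fun i => (x i).natAbs) (mem_univ i)

lemma linf_le_iff {x : Fin d → ℤ} {n : ℕ} : linf x ≤ n ↔ ∀ i, (x i).natAbs ≤ n := by
  simp [linf, Finset.sup_le_iff]

lemma exists_natAbs_eq_linf (hd : 1 ≤ d) (x : Fin d → ℤ) : ∃ i, (x i).natAbs = linf x := by
  have : Nonempty (Fin d) := ⟨⟨0, hd⟩⟩
  obtain ⟨i, -, hi⟩ := exists_mem_eq_sup univ univ_nonempty fun i => (x i).natAbs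
  exact ⟨i, hi.symm⟩

lemma exists_linf_sub_le_and_linf_add_le (hd : 1 ≤ d) (x : Fin d → ℤ) (m : ℕ) :
    ∃ z, linf (z - x) ≤ m ∧ linf x + m ≤ linf z := by
  classical
  obtain ⟨i, hi⟩ := exists_natAbs_eq_linf hd x
  obtain ⟨t, ht, hxt⟩ : ∃ t : ℤ, t.natAbs = m ∧ (x i + t).natAbs = (x i).natAbs + m := by
    rcases le_or_gt 0 (x i) with h | h
    · exact ⟨m, by omega, by omega⟩
    · exact ⟨-m, by omega, by omega⟩
  refine ⟨x + Pi.single i t, linf_le_iff.2 fun j => ?_, ?_⟩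
  · rcases eq_or_ne j i with rfl | hj <;> simp [*]
  · have := natAbs_le_linf (x + Pi.single i t) i
    simp only [Pi.add_apply, Pi.single_eq_same] at this
    omega

noncomputable def cube (x : Fin d → ℤ) (n : ℕ) : Finset (Fin d → ℤ) :=
  Fintype.piFinset fun i => Icc (x i - n) (x i + n)

lemma mem_cube {x y : Fin d → ℤ} {n : ℕ} : y ∈ cube x n ↔ linf (y - x) ≤ n := by
  simp only [cube, Fintype.mem_piFinset, mem_Icc, linf_le_iff, Pi.sub_apply]
  exact forall_congr' fun i => by omega

lemma cube_zero (n : ℕ) : cube (0 : Fin d → ℤ) n = Fintype.piFinset fun _ => Icc (-n : ℤ) n := by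
  simp [cube]

lemma card_cube (x : Fin d → ℤ) (n : ℕ) : #(cube x n) = (2 * n + 1) ^ d := by
  have hlen (a : ℤ) : (a + n + 1 - (a - n)).toNat = 2 * n + 1 := by omega
  simp only [cube, Fintype.card_piFinset, Int.card_Icc, hlen, prod_const, card_univ,
    Fintype.card_fin]

lemma card_cube_le (x : Fin d → ℤ) {n : ℕ} (hn : 1 ≤ n) : (#(cube x n) : ℝ) ≤ 3 ^ d * n ^ d := by
  rw [card_cube, ← mul_pow]
  exact_mod_cast Nat.pow_le_pow_left (by omega) d

lemma cube_subset_cube {x z : Fin d → ℤ} {k n : ℕ} (h : linf (z - x) + k ≤ n) :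
    cube z k ⊆ cube x n := by
  intro y hy
  rw [mem_cube, linf_le_iff] at *
  intro i
  have := hy i
  have := natAbs_le_linf (z - x) i
  simp only [Pi.sub_apply] at *
  omega

lemma linf_le_of_mem_cube {x y : Fin d → ℤ} {n : ℕ} (hy : y ∈ cube x n) :
    linf y ≤ linf x + n := by
  refine linf_le_iff.2 fun i => ?_
  have := linf_le_iff.1 (mem_cube.1 hy) i
  have := natAbs_le_linf x i
  simp only [Pi.sub_apply] at *
  omega

lemma le_linf_of_mem_cube {x y : Fin d → ℤ} {n : ℕ} (hy : y ∈ cube x n) :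
    linf x ≤ linf y + n := by
  refine linf_le_iff.2 fun i => ?_
  have := linf_le_iff.1 (mem_cube.1 hy) i
  have := natAbs_le_linf y i
  simp only [Pi.sub_apply] at *
  omega

lemma V_eq_sum_cube (α : ℝ) (x : Fin d → ℤ) {r : ℝ} (hr : 0 ≤ r) :
    V α x r = ∑ y ∈ cube x ⌊r⌋₊, nu α y := by
  have hball : {y : Fin d → ℤ | ((linf (y - x) : ℕ) : ℝ) ≤ r} = ↑(cube x ⌊r⌋₊) := by
    ext y
    simp [mem_cube, Nat.le_floor_iff hr]
  exact (tsum_congr_set_coe (nu α) hball).trans (Finset.tsum_subtype' _ _)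

end Cube

lemma rpow_le_rpow_mul_of_le_mul {a b c : ℝ} (ha : 0 < a) (hb : 0 < b) (hab : a ≤ c * b)
    (hba : b ≤ c * a) (α : ℝ) : a ^ α ≤ c ^ |α| * b ^ α := by
  have hc : 0 < c := pos_of_mul_pos_left (ha.trans_le hab) hb.le
  rcases le_or_gt 0 α with hα | hα
  · rw [abs_of_nonneg hα, ← mul_rpow hc.le hb.le]
    exact rpow_le_rpow ha.le hab hα
  · rw [abs_of_neg hα, rpow_neg hc.le, ← inv_rpow hc.le, ← mul_rpow (inv_nonneg.2 hc.le) hb.le]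
    refine rpow_le_rpow_of_nonpos (by positivity) ?_ hα.le
    rw [inv_mul_le_iff₀ hc]
    exact hba

lemma le_two_mul_floor {r : ℝ} (hr : 1 ≤ r) : r ≤ 2 * ⌊r⌋₊ := by
  have : (1 : ℝ) ≤ ⌊r⌋₊ := by exact_mod_cast Nat.le_floor (by exact_mod_cast hr)
  linarith [Nat.lt_floor_add_one r]

lemma max_le_two_mul_max {a s t : ℝ} (ha : 0 ≤ a) (hst : s ≤ 2 * t) :
    max a s ≤ 2 * max a t := by
  apply max_le <;> linarith [le_max_left a t, le_max_right a t]

lemma mul_rpow_sub_one_le_rpow_sub_rpow {p t : ℝ} (hp0 : 0 ≤ p) (hp1 : p ≤ 1) (ht : 1 ≤ t) :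
    p * t ^ (p - 1) ≤ t ^ p - (t - 1) ^ p := by
  have ht0 : 0 < t := by linarith
  have hbern := rpow_one_add_le_one_add_mul_self (s := -t⁻¹)
    (by linarith [inv_le_one_of_one_le₀ ht]) hp0 hp1
  have hsplit : t - 1 = t * (1 + -t⁻¹) := by field_simp; ring
  rw [hsplit, mul_rpow ht0.le (by linarith [inv_le_one_of_one_le₀ ht]), rpow_sub_one ht0.ne']
  have := mul_le_mul_of_nonneg_left hbern (rpow_nonneg ht0.le p)
  linarith [show t ^ p * (1 + p * -t⁻¹) = t ^ p - p * (t ^ p / t) by ring]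

lemma mul_sum_range_rpow_le {p : ℝ} (hp0 : 0 ≤ p) (hp1 : p ≤ 1) (N : ℕ) :
    p * ∑ i ∈ range N, ((i : ℝ) + 1) ^ (p - 1) ≤ (N : ℝ) ^ p := by
  have hstep (i : ℕ) : p * ((i : ℝ) + 1) ^ (p - 1) ≤ ((i + 1 : ℕ) : ℝ) ^ p - (i : ℝ) ^ p := by
    simpa using mul_rpow_sub_one_le_rpow_sub_rpow hp0 hp1 (t := (i : ℝ) + 1) (by simp)
  calc p * ∑ i ∈ range N, ((i : ℝ) + 1) ^ (p - 1)
      ≤ ∑ i ∈ range N, (((i + 1 : ℕ) : ℝ) ^ p - (i : ℝ) ^ p) := by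
        rw [mul_sum]; exact sum_le_sum fun i _ => hstep i
    _ = (N : ℝ) ^ p - (0 : ℝ) ^ p := by
        simpa using sum_range_sub (fun i : ℕ => (i : ℝ) ^ p) N
    _ ≤ (N : ℝ) ^ p := by
        linarith [zero_rpow_nonneg p]

lemma sum_Icc_comp_natAbs_le {f : ℕ → ℝ} (hf : ∀ i, 0 ≤ f i) (N : ℕ) :
    ∑ j ∈ Icc (-N : ℤ) N, f j.natAbs ≤ 2 * ∑ i ∈ range (N + 1), f i := by
  set s : Finset (ℕ × ℤ) := range (N + 1) ×ˢ {1, -1}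
  set g : ℕ × ℤ → ℤ := fun p => p.2 * p.1
  have hsub : Icc (-N : ℤ) N ⊆ s.image g := by
    intro j hj
    rw [mem_Icc] at hj
    simp only [s, g, mem_image, mem_product, mem_range, mem_insert, mem_singleton, Prod.exists]
    rcases le_or_gt 0 j with h | h
    · exact ⟨j.natAbs, 1, by omega, by omega⟩
    · exact ⟨j.natAbs, -1, by omega, by omega⟩
  calc ∑ j ∈ Icc (-N : ℤ) N, f j.natAbs
      ≤ ∑ j ∈ s.image g, f j.natAbs :=
        sum_le_sum_of_subset_of_nonneg hsub fun _ _ _ => hf _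
    _ ≤ ∑ p ∈ s, f (g p).natAbs := sum_image_le_of_nonneg fun _ _ => hf _
    _ = 2 * ∑ i ∈ range (N + 1), f i := by
        simp only [s, g, sum_product, Int.natAbs_mul]
        simp [mul_sum, two_mul]

lemma sum_Icc_rpow_le {α : ℝ} (hα : -1 < α) (hα0 : α ≤ 0) {N : ℕ} (hN : 1 ≤ N) :
    ∑ j ∈ Icc (-N : ℤ) N, ((max j.natAbs 1 : ℕ) : ℝ) ^ α ≤
      (2 + 2 / (1 + α)) * (N : ℝ) ^ (1 + α) := by
  have h1α : 0 < 1 + α := by linarith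
  have hone : 1 ≤ (N : ℝ) ^ (1 + α) := one_le_rpow (by exact_mod_cast hN) h1α.le
  have htail : ∑ i ∈ range N, ((i : ℝ) + 1) ^ α ≤ (N : ℝ) ^ (1 + α) / (1 + α) := by
    rw [le_div_iff₀ h1α, mul_comm]
    simpa using mul_sum_range_rpow_le h1α.le (by linarith) N
  have hhalf : ∑ i ∈ range (N + 1), ((max i 1 : ℕ) : ℝ) ^ α
      = 1 + ∑ i ∈ range N, ((i : ℝ) + 1) ^ α := by
    rw [sum_range_succ', add_comm]
    simp
  calc ∑ j ∈ Icc (-N : ℤ) N, ((max j.natAbs 1 : ℕ) : ℝ) ^ α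
      ≤ 2 * ∑ i ∈ range (N + 1), ((max i 1 : ℕ) : ℝ) ^ α :=
        sum_Icc_comp_natAbs_le (f := fun i => ((max i 1 : ℕ) : ℝ) ^ α)
          (fun i => rpow_nonneg (Nat.cast_nonneg _) _) N
    _ ≤ 2 * (1 + (N : ℝ) ^ (1 + α) / (1 + α)) := by rw [hhalf]; linarith
    _ = 2 + 2 / (1 + α) * (N : ℝ) ^ (1 + α) := by ring
    _ ≤ (2 + 2 / (1 + α)) * (N : ℝ) ^ (1 + α) := by nlinarith [div_pos two_pos h1α]

section CubeMass

variable {d : ℕ}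

lemma nu_nonneg (α : ℝ) (y : Fin d → ℤ) : 0 ≤ nu α y :=
  rpow_nonneg (Nat.cast_nonneg _) _

lemma exists_sum_cube_zero_nu_le (hd : 1 ≤ d) {α : ℝ} (hα : -1 < α) :
    ∃ C > 0, ∀ N : ℕ, 1 ≤ N →
      ∑ y ∈ cube (0 : Fin d → ℤ) N, nu α y ≤ C * (N : ℝ) ^ d * (N : ℝ) ^ α := by
  have h1α : 0 < 1 + α := by linarith
  have hC : 1 ≤ 2 + 2 / (1 + α) := by linarith [div_pos two_pos h1α]
  refine ⟨3 ^ d * (2 + 2 / (1 + α)), by positivity, fun N hN => ?_⟩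
  have hN0 : (0 : ℝ) < N := by exact_mod_cast hN
  rcases le_or_gt 0 α with hα0 | hα0
  · have hν : ∀ y ∈ cube (0 : Fin d → ℤ) N, nu α y ≤ (N : ℝ) ^ α := by
      intro y hy
      have hy' : linf y ≤ N := by simpa using mem_cube.1 hy
      exact rpow_le_rpow (Nat.cast_nonneg _) (by exact_mod_cast max_le hy' hN) hα0
    calc ∑ y ∈ cube (0 : Fin d → ℤ) N, nu α y
        ≤ #(cube (0 : Fin d → ℤ) N) * (N : ℝ) ^ α := by
          simpa using sum_le_card_nsmul _ _ _ hν
      _ ≤ 3 ^ d * (N : ℝ) ^ d * (N : ℝ) ^ α := by gcongr; exact card_cube_le 0 hN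
      _ ≤ 3 ^ d * (2 + 2 / (1 + α)) * (N : ℝ) ^ d * (N : ℝ) ^ α := by
          gcongr; exact le_mul_of_one_le_right (by positivity) hC
  · -- for `α < 0` the weight only grows when `|y|` is replaced by one coordinate `|y₀|`
    obtain ⟨e, rfl⟩ : ∃ e, d = e + 1 := ⟨d - 1, by omega⟩
    have hν (y : Fin (e + 1) → ℤ) : nu α y ≤ ((max (y 0).natAbs 1 : ℕ) : ℝ) ^ α :=
      rpow_le_rpow_of_nonpos (by positivity)
        (by exact_mod_cast max_le_max (natAbs_le_linf y 0) le_rfl) hα0.le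
    have hlen : #(Icc (-N : ℤ) N) = 2 * N + 1 := by simp only [Int.card_Icc]; omega
    calc ∑ y ∈ cube (0 : Fin (e + 1) → ℤ) N, nu α y
        ≤ ∑ y ∈ cube (0 : Fin (e + 1) → ℤ) N, ((max (y 0).natAbs 1 : ℕ) : ℝ) ^ α :=
          sum_le_sum fun y _ => hν y
      _ = ((2 * N + 1 : ℕ) : ℝ) ^ e * ∑ j ∈ Icc (-N : ℤ) N, ((max j.natAbs 1 : ℕ) : ℝ) ^ α := by
          rw [cube_zero, Fintype.sum_piFinset_apply (fun j : ℤ => ((max j.natAbs 1 : ℕ) : ℝ) ^ α),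
            hlen]
          simp
      _ ≤ (3 * (N : ℝ)) ^ e * ((2 + 2 / (1 + α)) * (N : ℝ) ^ (1 + α)) := by
          gcongr
          · push_cast; linarith [(Nat.one_le_cast (α := ℝ)).2 hN]
          · exact sum_Icc_rpow_le hα hα0.le hN
      _ = 3 ^ e * (2 + 2 / (1 + α)) * (N : ℝ) ^ (e + 1) * (N : ℝ) ^ α := by
          rw [rpow_add hN0, rpow_one]; ring
      _ ≤ 3 ^ (e + 1) * (2 + 2 / (1 + α)) * (N : ℝ) ^ (e + 1) * (N : ℝ) ^ α := by
          gcongr <;> norm_num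

lemma exists_le_mul_sum_cube_nu (hd : 1 ≤ d) (α : ℝ) :
    ∃ C > 0, ∀ (x : Fin d → ℤ) (n : ℕ), 1 ≤ n →
      (n : ℝ) ^ d * ((max (linf x) n : ℕ) : ℝ) ^ α ≤ C * ∑ y ∈ cube x n, nu α y := by
  refine ⟨3 ^ d * 3 ^ |α|, by positivity, fun x n hn => ?_⟩
  -- a subcube of radius `n / 3` on which `|y|` is comparable to `max (|x|, n)`
  obtain ⟨z, hzx, hz⟩ := exists_linf_sub_le_and_linf_add_le hd x (n - n / 3)
  have hsub : cube z (n / 3) ⊆ cube x n := cube_subset_cube (by omega)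
  have hν : ∀ y ∈ cube z (n / 3),
      ((max (linf x) n : ℕ) : ℝ) ^ α ≤ 3 ^ |α| * nu α y := by
    intro y hy
    have h1 := le_linf_of_mem_cube hy
    have h2 := linf_le_of_mem_cube (hsub hy)
    exact rpow_le_rpow_mul_of_le_mul (by exact_mod_cast (show 0 < max (linf x) n by omega))
      (by exact_mod_cast (show 0 < max (linf y) 1 by omega))
      (by exact_mod_cast (show max (linf x) n ≤ 3 * max (linf y) 1 by omega))
      (by exact_mod_cast (show max (linf y) 1 ≤ 3 * max (linf x) n by omega)) α
  have hcard : (n : ℝ) ^ d ≤ 3 ^ d * #(cube z (n / 3)) := by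
    rw [card_cube, Nat.cast_pow, ← mul_pow]
    exact_mod_cast Nat.pow_le_pow_left (by omega) d
  calc (n : ℝ) ^ d * ((max (linf x) n : ℕ) : ℝ) ^ α
      ≤ 3 ^ d * #(cube z (n / 3)) * ((max (linf x) n : ℕ) : ℝ) ^ α := by gcongr
    _ = 3 ^ d * ∑ y ∈ cube z (n / 3), ((max (linf x) n : ℕ) : ℝ) ^ α := by
        rw [sum_const, nsmul_eq_mul]; ring
    _ ≤ 3 ^ d * ∑ y ∈ cube z (n / 3), 3 ^ |α| * nu α y := by
        gcongr with y hy; exact hν y hy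
    _ = 3 ^ d * 3 ^ |α| * ∑ y ∈ cube z (n / 3), nu α y := by rw [← mul_sum]; ring
    _ ≤ 3 ^ d * 3 ^ |α| * ∑ y ∈ cube x n, nu α y := by
        gcongr 3 ^ d * 3 ^ |α| * ?_
        exact sum_le_sum_of_subset_of_nonneg hsub fun y _ _ => nu_nonneg α y

lemma exists_sum_cube_nu_le (hd : 1 ≤ d) {α : ℝ} (hα : -1 < α) :
    ∃ C > 0, ∀ (x : Fin d → ℤ) (n : ℕ), 1 ≤ n →
      ∑ y ∈ cube x n, nu α y ≤ C * (n : ℝ) ^ d * ((max (linf x) n : ℕ) : ℝ) ^ α := by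
  obtain ⟨C₀, hC₀, hzero⟩ := exists_sum_cube_zero_nu_le hd hα
  refine ⟨3 ^ d * 2 ^ |α| + C₀ * 3 ^ d * 3 ^ |α|, by positivity, fun x n hn => ?_⟩
  have hM : (0 : ℝ) < ((max (linf x) n : ℕ) : ℝ) := by
    exact_mod_cast (show 0 < max (linf x) n by omega)
  by_cases hfar : 2 * n ≤ linf x
  · -- far from the origin, `|y|` is comparable to `|x|` on the whole cube
    have hν : ∀ y ∈ cube x n, nu α y ≤ 2 ^ |α| * ((max (linf x) n : ℕ) : ℝ) ^ α := by
      intro y hy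
      have h1 := le_linf_of_mem_cube hy
      have h2 := linf_le_of_mem_cube hy
      exact rpow_le_rpow_mul_of_le_mul (by exact_mod_cast (show 0 < max (linf y) 1 by omega)) hM
        (by exact_mod_cast (show max (linf y) 1 ≤ 2 * max (linf x) n by omega))
        (by exact_mod_cast (show max (linf x) n ≤ 2 * max (linf y) 1 by omega)) α
    calc ∑ y ∈ cube x n, nu α y
        ≤ #(cube x n) * (2 ^ |α| * ((max (linf x) n : ℕ) : ℝ) ^ α) := by
          simpa using sum_le_card_nsmul _ _ _ hν
      _ ≤ 3 ^ d * n ^ d * (2 ^ |α| * ((max (linf x) n : ℕ) : ℝ) ^ α) := by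
          gcongr; exact card_cube_le x hn
      _ ≤ (3 ^ d * 2 ^ |α| + C₀ * 3 ^ d * 3 ^ |α|) * n ^ d * ((max (linf x) n : ℕ) : ℝ) ^ α := by
          rw [← mul_assoc, mul_right_comm (3 ^ d : ℝ)]
          gcongr; exact le_add_of_nonneg_right (by positivity)
  · -- near the origin, the cube lies in the cube of radius `3 n` about `0`
    have hsub : cube x n ⊆ cube 0 (3 * n) := cube_subset_cube (by simp; omega)
    have hcomp : ((3 * n : ℕ) : ℝ) ^ α ≤ 3 ^ |α| * ((max (linf x) n : ℕ) : ℝ) ^ α :=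
      rpow_le_rpow_mul_of_le_mul (by exact_mod_cast (show 0 < 3 * n by omega)) hM
        (by exact_mod_cast (show 3 * n ≤ 3 * max (linf x) n by omega))
        (by exact_mod_cast (show max (linf x) n ≤ 3 * (3 * n) by omega)) α
    calc ∑ y ∈ cube x n, nu α y
        ≤ ∑ y ∈ cube 0 (3 * n), nu α y :=
          sum_le_sum_of_subset_of_nonneg hsub fun y _ _ => nu_nonneg α y
      _ ≤ C₀ * ((3 * n : ℕ) : ℝ) ^ d * ((3 * n : ℕ) : ℝ) ^ α := hzero _ (by omega)
      _ ≤ C₀ * (3 ^ d * n ^ d) * (3 ^ |α| * ((max (linf x) n : ℕ) : ℝ) ^ α) := by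
          gcongr; push_cast; rw [mul_pow]
      _ ≤ (3 ^ d * 2 ^ |α| + C₀ * 3 ^ d * 3 ^ |α|) * n ^ d * ((max (linf x) n : ℕ) : ℝ) ^ α := by
          rw [show C₀ * (3 ^ d * n ^ d) * (3 ^ |α| * ((max (linf x) n : ℕ) : ℝ) ^ α)
            = C₀ * 3 ^ d * 3 ^ |α| * n ^ d * ((max (linf x) n : ℕ) : ℝ) ^ α by ring]
          gcongr; exact le_add_of_nonneg_left (by positivity)

end CubeMass

/-- There are constants `c₁, c₂ > 0`, depending only on `α` and `d`,
such that for every `x ∈ ℤ^d` and every real `r ≥ 1`,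
`c₁ r^d (max(|x|,r))^α ≤ V(x,r) ≤ c₂ r^d (max(|x|,r))^α`. -/
theorem ball_volume (d : ℕ) (hd : 1 ≤ d) (α : ℝ) (hα : -1 < α) :
    ∃ c₁ c₂ : ℝ, 0 < c₁ ∧ 0 < c₂ ∧
      ∀ (x : Fin d → ℤ) (r : ℝ), 1 ≤ r →
        c₁ * r ^ d * (max ((linf x : ℕ) : ℝ) r) ^ α ≤ V α x r ∧
          V α x r ≤ c₂ * r ^ d * (max ((linf x : ℕ) : ℝ) r) ^ α := by
  obtain ⟨C₁, hC₁, hlower⟩ := exists_le_mul_sum_cube_nu hd α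
  obtain ⟨C₂, hC₂, hupper⟩ := exists_sum_cube_nu_le hd hα
  refine ⟨(C₁ * 2 ^ d * 2 ^ |α|)⁻¹, C₂ * 2 ^ |α|, by positivity, by positivity, fun x r hr => ?_⟩
  set n := ⌊r⌋₊
  have hn : 1 ≤ n := Nat.le_floor (by exact_mod_cast hr)
  have hnr : (n : ℝ) ≤ r := Nat.floor_le (by linarith)
  have hrn : r ≤ 2 * n := le_two_mul_floor hr
  have hMn : (0 : ℝ) < max (linf x : ℝ) n := lt_max_of_lt_right (by positivity)
  have hMr : (0 : ℝ) < max (linf x : ℝ) r := lt_max_of_lt_right (by linarith)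
  have hMr_le := max_le_two_mul_max (Nat.cast_nonneg (linf x)) hrn
  have hMn_le := max_le_two_mul_max (Nat.cast_nonneg (linf x)) (show (n : ℝ) ≤ 2 * r by linarith)
  rw [V_eq_sum_cube α x (by linarith)]
  constructor
  · calc (C₁ * 2 ^ d * 2 ^ |α|)⁻¹ * r ^ d * (max (linf x : ℝ) r) ^ α
        ≤ (C₁ * 2 ^ d * 2 ^ |α|)⁻¹ * (2 * n) ^ d * (2 ^ |α| * (max (linf x : ℝ) n) ^ α) := by
          gcongr; exact rpow_le_rpow_mul_of_le_mul hMr hMn hMr_le hMn_le α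
      _ = C₁⁻¹ * ((n : ℝ) ^ d * ((max (linf x) n : ℕ) : ℝ) ^ α) := by
          rw [Nat.cast_max]; field_simp; ring
      _ ≤ ∑ y ∈ cube x n, nu α y := by rw [inv_mul_le_iff₀ hC₁]; exact hlower x n hn
  · calc ∑ y ∈ cube x n, nu α y ≤ C₂ * (n : ℝ) ^ d * ((max (linf x) n : ℕ) : ℝ) ^ α :=
          hupper x n hn
      _ ≤ C₂ * r ^ d * (2 ^ |α| * (max (linf x : ℝ) r) ^ α) := by
          rw [Nat.cast_max]
          gcongr; exact rpow_le_rpow_mul_of_le_mul hMn hMr hMn_le hMr_le α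
      _ = C₂ * 2 ^ |α| * r ^ d * (max (linf x : ℝ) r) ^ α := by ring
end

section
/- There exists a constant c₁ > 0, depending only on α and d, such that for all x, y ∈ ℤ^d one has (max(ν_x, ν_y)) · |log ν_x − log ν_y|³ ≤ c₁ · ρ(x,y). -/
open scoped BigOperators

lemma nu_pos (α : ℝ) {d : ℕ} (x : Fin d → ℤ) : 0 < nu α x := by
  apply Real.rpow_pos_of_pos
  have : 1 ≤ max (linf x) 1 := le_max_right _ _
  exact_mod_cast this

lemma linf_eq_zero {d : ℕ} {x : Fin d → ℤ} (h : linf x = 0) : x = 0 := by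
  funext i
  have : (x i).natAbs ≤ 0 := h ▸ Finset.le_sup (f := fun i => (x i).natAbs) (Finset.mem_univ i)
  simpa [Int.natAbs_eq_zero] using Nat.le_zero.mp this

lemma linf_step {d : ℕ} {a b : Fin d → ℤ} (h : l1 (a - b) = 1) : linf a ≤ linf b + 1 := by
  apply Finset.sup_le
  intro i _
  have h1 : (a i).natAbs ≤ (b i).natAbs + ((a - b) i).natAbs := by
    have : a i = b i + (a - b) i := by simp
    rw [this]; exact Int.natAbs_add_le _ _
  have h2 : ((a - b) i).natAbs ≤ l1 (a - b) :=
    Finset.single_le_sum (f := fun j => ((a - b) j).natAbs) (fun j _ => Nat.zero_le _)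
      (Finset.mem_univ i)
  have h3 : (b i).natAbs ≤ linf b :=
    Finset.le_sup (f := fun j => (b j).natAbs) (Finset.mem_univ i)
  omega

lemma path_exists_aux {d : ℕ} : ∀ (N : ℕ) (x y : Fin d → ℤ), l1 (y - x) = N →
    ∃ (m : ℕ) (z : ℕ → Fin d → ℤ), IsPath z m ∧ z 0 = x ∧ z m = y := by
  intro N
  induction N with
  | zero =>
    intro x y h
    have : y = x := by
      funext i
      unfold l1 at h
      have h2 := Finset.single_le_sum (f := fun j => ((y - x) j).natAbs)
        (fun j _ => Nat.zero_le _) (Finset.mem_univ i)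
      simp only [h] at h2
      have h3 : (y - x) i = 0 := Int.natAbs_eq_zero.mp (by simpa using h2)
      have h4 : y i - x i = 0 := h3
      omega
    exact ⟨0, fun _ => x, fun i hi => absurd hi (Nat.not_lt_zero i), rfl, this ▸ rfl⟩
  | succ N ih =>
    intro x y h
    have hne : ∃ i, (y - x) i ≠ 0 := by
      by_contra hc
      push_neg at hc
      have : l1 (y - x) = 0 := by
        unfold l1; apply Finset.sum_eq_zero; intro i _; simp [hc i]
      omega
    obtain ⟨i, hi⟩ := hne
    set v := y - x with hv
    set s : ℤ := if 0 < v i then 1 else -1 with hs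
    set x' := x + Pi.single i s with hx'
    have hstep : l1 (x' - x) = 1 := by
      have : x' - x = Pi.single i s := by rw [hx']; abel
      rw [this]
      unfold l1
      rw [Finset.sum_eq_single i]
      · simp [hs]; split_ifs <;> simp
      · intro j _ hj; simp [Pi.single_eq_of_ne hj]
      · intro hc; exact absurd (Finset.mem_univ i) hc
    have hrest : l1 (y - x') = N := by
      have hyx' : y - x' = v - Pi.single i s := by
        simp [hx', hv]; abel
      unfold l1 at h ⊢
      rw [hyx']
      rw [Finset.sum_eq_sum_sdiff_singleton_add (Finset.mem_univ i)] at h ⊢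
      have he : ∑ j ∈ (Finset.univ \ {i} : Finset (Fin d)), ((v - Pi.single i s : Fin d → ℤ) j).natAbs
          = ∑ j ∈ (Finset.univ \ {i} : Finset (Fin d)), (v j).natAbs := by
        apply Finset.sum_congr rfl
        intro j hj
        have hj' : j ≠ i := by simp at hj; exact hj
        simp [Pi.single_eq_of_ne hj']
      rw [he]
      have hterm : ((v - Pi.single i s : Fin d → ℤ) i).natAbs = (v i).natAbs - 1 := by
        have h0 : (v - Pi.single i s : Fin d → ℤ) i = v i - s := by simp
        rw [h0, hs]
        split_ifs with hpos <;> omega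
      rw [hterm]
      have hvi : 1 ≤ (v i).natAbs := by omega
      omega
    obtain ⟨m', z', hz', h0, hm⟩ := ih x' y hrest
    refine ⟨m' + 1, fun k => if k = 0 then x else z' (k - 1), ?_, by simp, by simp [hm]⟩
    intro j hj
    rcases Nat.eq_zero_or_pos j with hj0 | hjp
    · subst hj0
      simpa [h0] using hstep
    · have h1 : j ≠ 0 := by omega
      have h2 : j + 1 ≠ 0 := by omega
      simp only [h1, h2, if_neg]
      have : j + 1 - 1 = (j - 1) + 1 := by omega
      rw [this]
      exact hz' (j - 1) (by omega)

lemma ivt_mono (f : ℕ → ℕ) : ∀ (m : ℕ), (∀ i < m, f (i+1) ≤ f i + 1) →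
    ∀ k, f 0 ≤ k → k ≤ f m → ∃ i ≤ m, f i = k := by
  intro m
  induction m with
  | zero => intro _ k h1 h2; exact ⟨0, le_refl 0, le_antisymm h1 h2⟩
  | succ m ih =>
    intro h k h1 h2
    rcases le_or_gt k (f m) with h3 | h3
    · obtain ⟨i, hi, hfi⟩ := ih (fun i hi => h i (by omega)) k h1 h3
      exact ⟨i, by omega, hfi⟩
    · have := h m (by omega)
      exact ⟨m+1, le_refl _, by omega⟩

lemma ivt (f : ℕ → ℕ) (m : ℕ) (h : ∀ i < m, f (i+1) ≤ f i + 1 ∧ f i ≤ f (i+1) + 1)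
    (k : ℕ) (h1 : min (f 0) (f m) ≤ k) (h2 : k ≤ max (f 0) (f m)) : ∃ i ≤ m, f i = k := by
  rcases le_total (f 0) (f m) with hc | hc
  · exact ivt_mono f m (fun i hi => (h i hi).1) k (by omega) (by omega)
  · have key := ivt_mono (fun i => f (m - i)) m ?_ k ?_ ?_
    · obtain ⟨i, hi, hfi⟩ := key
      exact ⟨m - i, by omega, hfi⟩
    · intro i hi
      have hj : m - i = (m - (i+1)) + 1 := by omega
      have := (h (m - (i+1)) (by omega)).2
      rw [hj]
      exact this
    · simpa using by omega
    · simpa using by omega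

lemma l1_sub_comm {d : ℕ} (a b : Fin d → ℤ) : l1 (a - b) = l1 (b - a) := by
  unfold l1
  apply Finset.sum_congr rfl
  intro j _
  have : (a - b) j = -((b - a) j) := by simp
  rw [this, Int.natAbs_neg]


lemma sum_le_rho {d : ℕ} (α : ℝ) (x y : Fin d → ℤ) (hxy : x ≠ y) :
    ∑ k ∈ Finset.Icc (min (max (linf x) 1) (max (linf y) 1))
        (max (max (linf x) 1) (max (linf y) 1)), ((k : ℝ)) ^ α ≤ rho α x y := by
  set a := max (linf x) 1 with ha
  set b := max (linf y) 1 with hb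
  set A := min a b with hA
  set B := max a b with hB
  have hA1 : 1 ≤ A := by omega
  have hlmax : 1 ≤ max (linf x) (linf y) := by
    by_contra hc
    push_neg at hc
    have hx0 : linf x = 0 := by omega
    have hy0 : linf y = 0 := by omega
    exact hxy ((linf_eq_zero hx0).trans (linf_eq_zero hy0).symm)
  rw [rho, if_neg hxy]
  apply le_csInf
  · obtain ⟨m, z, hz, h0, hm⟩ := path_exists_aux (l1 (y - x)) x y rfl
    exact ⟨_, m, z, hz, h0, hm, rfl⟩
  · rintro S ⟨m, z, hz, h0, hm, rfl⟩
    have hstep : ∀ i < m, linf (z (i+1)) ≤ linf (z i) + 1 ∧ linf (z i) ≤ linf (z (i+1)) + 1 := by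
      intro i hi
      constructor
      · exact linf_step (hz i hi)
      · exact linf_step ((l1_sub_comm _ _).trans (hz i hi))
    have key : ∀ k, ∃ i, A ≤ k → k ≤ B → (i ≤ m ∧ linf (z i) = k) := by
      intro k
      rcases le_or_gt A k with h1 | h1
      · rcases le_or_gt k B with h2 | h2
        · have := ivt (fun i => linf (z i)) m hstep k (by simp [h0, hm]; omega)
            (by simp [h0, hm]; omega)
          obtain ⟨i, hi, hfi⟩ := this
          exact ⟨i, fun _ _ => ⟨hi, hfi⟩⟩
        · exact ⟨0, fun _ h => absurd h (by omega)⟩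
      · exact ⟨0, fun h _ => absurd h (by omega)⟩
    choose g hg using key
    have hsum1 : ∀ k ∈ Finset.Icc A B, ((k:ℝ)) ^ α = nu α (z (g k)) := by
      intro k hk
      rw [Finset.mem_Icc] at hk
      obtain ⟨hgm, hgl⟩ := hg k hk.1 hk.2
      have hk1 : max k 1 = k := by omega
      rw [nu, hgl, hk1]
    rw [Finset.sum_congr rfl hsum1]
    have hinj : ∀ k1 ∈ Finset.Icc A B, ∀ k2 ∈ Finset.Icc A B, g k1 = g k2 → k1 = k2 := by
      intro k1 hk1 k2 hk2 hgk
      rw [Finset.mem_Icc] at hk1 hk2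
      have e1 := (hg k1 hk1.1 hk1.2).2
      have e2 := (hg k2 hk2.1 hk2.2).2
      rw [← e1, ← e2, hgk]
    rw [← Finset.sum_image (s := Finset.Icc A B) (g := g) (f := fun i => nu α (z i)) hinj]
    apply Finset.sum_le_sum_of_subset_of_nonneg
    · intro i hi
      rw [Finset.mem_image] at hi
      obtain ⟨k, hk, rfl⟩ := hi
      rw [Finset.mem_Icc] at hk
      have := (hg k hk.1 hk.2).1
      rw [Finset.mem_range]
      omega
    · intro i _ _
      exact (nu_pos α _).le


lemma rpow_between {α u v w : ℝ} (hv : 0 < v) (h1 : v ≤ u) (h2 : u ≤ w) :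
    min (v ^ α) (w ^ α) ≤ u ^ α := by
  rcases le_or_gt 0 α with h | h
  · exact le_trans (min_le_left _ _) (Real.rpow_le_rpow hv.le h1 h)
  · exact le_trans (min_le_right _ _) (Real.rpow_le_rpow_of_nonpos (hv.trans_le h1) h2 h.le)

lemma arith (α : ℝ) (hα : -1 < α) : ∃ c : ℝ, 0 < c ∧ ∀ a b : ℕ, 1 ≤ a → a ≤ b →
    max ((a:ℝ)^α) ((b:ℝ)^α) * (Real.log b - Real.log a)^3 ≤
      c * ∑ k ∈ Finset.Icc a b, ((k:ℝ))^α := by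
  set β : ℝ := min 1 (1+α) with hβdef
  have hβ : 0 < β := by
    rw [hβdef]; simp only [lt_min_iff]; constructor <;> linarith
  set cA : ℝ := (2:ℝ) ^ |α| with hcA
  set cB : ℝ := (3/β)^3 * (2:ℝ) ^ (1 + |α|) with hcB
  have hcA0 : 0 < cA := Real.rpow_pos_of_pos two_pos _
  have hcB0 : 0 < cB := by
    apply mul_pos
    · positivity
    · exact Real.rpow_pos_of_pos two_pos _
  refine ⟨cA + cB, by linarith, ?_⟩
  intro a b ha1 hab
  have ha'1 : (1:ℝ) ≤ (a:ℝ) := by exact_mod_cast ha1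
  have hb'1 : (1:ℝ) ≤ (b:ℝ) := by
    have : 1 ≤ b := le_trans ha1 hab
    exact_mod_cast this
  have ha'0 : (0:ℝ) < a := by linarith
  have hb'0 : (0:ℝ) < b := by linarith
  have hab' : (a:ℝ) ≤ (b:ℝ) := by exact_mod_cast hab
  have hL0 : 0 ≤ Real.log b - Real.log a := by
    have := Real.log_le_log ha'0 hab'
    linarith
  have hSum0 : 0 ≤ ∑ k ∈ Finset.Icc a b, ((k:ℝ))^α := by
    apply Finset.sum_nonneg
    intro k _
    positivity
  have hM0 : 0 ≤ max ((a:ℝ)^α) ((b:ℝ)^α) :=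
    le_trans (Real.rpow_pos_of_pos ha'0 α).le (le_max_left _ _)
  rcases lt_or_ge b (2*a) with hcase | hcase
  · -- b < 2a
    have hkey : max ((a:ℝ)^α) ((b:ℝ)^α) * (Real.log b - Real.log a)^3 ≤
        cA * ∑ k ∈ Finset.Icc a b, ((k:ℝ))^α := by
      set mα : ℝ := min ((a:ℝ)^α) ((b:ℝ)^α) with hmα
      have hmα0 : 0 < mα := lt_min (Real.rpow_pos_of_pos ha'0 α) (Real.rpow_pos_of_pos hb'0 α)
      have hb2a : (b:ℝ) ≤ 2*a := by exact_mod_cast hcase.le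
      have hMm : max ((a:ℝ)^α) ((b:ℝ)^α) ≤ cA * mα := by
        rcases le_or_gt 0 α with hs | hs
        · have h1 : (a:ℝ)^α ≤ (b:ℝ)^α := Real.rpow_le_rpow ha'0.le hab' hs
          have h2 : (b:ℝ)^α ≤ (2*a:ℝ)^α := Real.rpow_le_rpow hb'0.le hb2a hs
          have h3 : ((2:ℝ)*a)^α = 2^α * (a:ℝ)^α := Real.mul_rpow two_pos.le ha'0.le
          have h4 : mα = (a:ℝ)^α := min_eq_left h1
          rw [max_eq_right h1, h4, hcA, abs_of_nonneg hs]
          calc (b:ℝ)^α ≤ 2^α * (a:ℝ)^α := by rw [← h3]; exact h2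
            _ = (2:ℝ)^α * (a:ℝ)^α := rfl
        · have h1 : (b:ℝ)^α ≤ (a:ℝ)^α := Real.rpow_le_rpow_of_nonpos ha'0 hab' hs.le
          have h4 : mα = (b:ℝ)^α := min_eq_right h1
          have hba2 : (b:ℝ)/2 ≤ a := by linarith
          have h2 : (a:ℝ)^α ≤ ((b:ℝ)/2)^α :=
            Real.rpow_le_rpow_of_nonpos (by linarith) hba2 hs.le
          have h3 : ((b:ℝ)/2)^α = (b:ℝ)^α / 2^α := Real.div_rpow hb'0.le two_pos.le α
          rw [max_eq_left h1, h4, hcA, abs_of_neg hs]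
          calc (a:ℝ)^α ≤ (b:ℝ)^α / 2^α := by rw [← h3]; exact h2
            _ = 2^(-α) * (b:ℝ)^α := by
                rw [Real.rpow_neg two_pos.le]
                ring
      have hL1 : Real.log b - Real.log a ≤ ((b:ℝ) - a)/a := by
        have h1 : Real.log ((b:ℝ)/a) = Real.log b - Real.log a :=
          Real.log_div (by linarith) (by linarith)
        have h2 : Real.log ((b:ℝ)/a) ≤ (b:ℝ)/a - 1 :=
          Real.log_le_sub_one_of_pos (by positivity)
        have h3 : (b:ℝ)/a - 1 = ((b:ℝ) - a)/a := by field_simp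
        linarith
      have hL2 : ((b:ℝ) - a)/a ≤ 1 := by
        rw [div_le_one ha'0]; linarith
      have hL3 : (Real.log b - Real.log a)^3 ≤ (b:ℝ) - a := by
        calc (Real.log b - Real.log a)^3 ≤ (((b:ℝ) - a)/a)^3 := by
              apply pow_le_pow_left₀ hL0 hL1
          _ ≤ (((b:ℝ) - a)/a)^1 :=
              pow_le_pow_of_le_one (div_nonneg (by linarith) ha'0.le) hL2 (by norm_num)
          _ = ((b:ℝ) - a)/a := pow_one _
          _ ≤ (b:ℝ) - a := by
              rw [div_le_iff₀ ha'0]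
              nlinarith
      have hSum1 : ((b:ℝ) - a) * mα ≤ ∑ k ∈ Finset.Icc a b, ((k:ℝ))^α := by
        have h1 : ∀ k ∈ Finset.Icc a b, mα ≤ ((k:ℝ))^α := by
          intro k hk
          rw [Finset.mem_Icc] at hk
          exact rpow_between ha'0 (by exact_mod_cast hk.1) (by exact_mod_cast hk.2)
        calc ((b:ℝ) - a) * mα ≤ ((Finset.Icc a b).card : ℝ) * mα := by
              apply mul_le_mul_of_nonneg_right _ hmα0.le
              rw [Nat.card_Icc]
              push_cast [Nat.cast_sub (by omega : a ≤ b + 1)]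
              linarith
          _ ≤ ∑ k ∈ Finset.Icc a b, ((k:ℝ))^α := by
              have h2 := Finset.card_nsmul_le_sum (Finset.Icc a b) _ _ h1
              rwa [nsmul_eq_mul] at h2
      calc max ((a:ℝ)^α) ((b:ℝ)^α) * (Real.log b - Real.log a)^3
          ≤ (cA * mα) * ((b:ℝ) - a) := by
            apply mul_le_mul hMm hL3 (by positivity) (by positivity)
        _ = cA * (((b:ℝ) - a) * mα) := by ring
        _ ≤ cA * ∑ k ∈ Finset.Icc a b, ((k:ℝ))^α := by
            apply mul_le_mul_of_nonneg_left hSum1 hcA0.le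
    calc max ((a:ℝ)^α) ((b:ℝ)^α) * (Real.log b - Real.log a)^3
        ≤ cA * ∑ k ∈ Finset.Icc a b, ((k:ℝ))^α := hkey
      _ ≤ (cA + cB) * ∑ k ∈ Finset.Icc a b, ((k:ℝ))^α :=
          mul_le_mul_of_nonneg_right (by linarith) hSum0
  · -- 2a ≤ b
    have hsub : Finset.Icc (b/2+1) b ⊆ Finset.Icc a b := by
      intro k hk
      rw [Finset.mem_Icc] at hk ⊢
      omega
    have hterm : ∀ k ∈ Finset.Icc (b/2+1) b, (2:ℝ)^(-|α|) * (b:ℝ)^α ≤ ((k:ℝ))^α := by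
      intro k hk
      rw [Finset.mem_Icc] at hk
      have hk1 : (b:ℝ)/2 ≤ (k:ℝ) := by
        have h2 : b ≤ 2 * (b/2 + 1) := by omega
        have : (b:ℝ) ≤ 2 * ((b/2 + 1 : ℕ):ℝ) := by exact_mod_cast h2
        have hkk : ((b/2 + 1 : ℕ):ℝ) ≤ (k:ℝ) := by exact_mod_cast hk.1
        linarith
      have hk2 : (k:ℝ) ≤ (b:ℝ) := by exact_mod_cast hk.2
      rcases le_or_gt 0 α with hs | hs
      · have h1 : ((b:ℝ)/2)^α ≤ (k:ℝ)^α := Real.rpow_le_rpow (by positivity) hk1 hs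
        have h2 : ((b:ℝ)/2)^α = (b:ℝ)^α / 2^α := Real.div_rpow hb'0.le two_pos.le α
        rw [abs_of_nonneg hs, Real.rpow_neg two_pos.le]
        calc (2^α)⁻¹ * (b:ℝ)^α = (b:ℝ)^α / 2^α := by ring
          _ = ((b:ℝ)/2)^α := h2.symm
          _ ≤ (k:ℝ)^α := h1
      · have h1 : (b:ℝ)^α ≤ (k:ℝ)^α :=
          Real.rpow_le_rpow_of_nonpos (by linarith) hk2 hs.le
        have h2 : (2:ℝ)^(-|α|) ≤ 1 :=
          Real.rpow_le_one_of_one_le_of_nonpos one_le_two (neg_nonpos.mpr (abs_nonneg α))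
        nlinarith [Real.rpow_pos_of_pos hb'0 α]
    have hcard : ((b:ℝ)/2) ≤ ((Finset.Icc (b/2+1) b).card : ℝ) := by
      rw [Nat.card_Icc]
      have h1 : b ≤ 2 * (b + 1 - (b/2+1)) := by omega
      have : (b:ℝ) ≤ 2 * ((b + 1 - (b/2+1) : ℕ):ℝ) := by exact_mod_cast h1
      linarith
    have hSum1 : ((b:ℝ)/2) * ((2:ℝ)^(-|α|) * (b:ℝ)^α) ≤ ∑ k ∈ Finset.Icc a b, ((k:ℝ))^α := by
      have h1 : ((Finset.Icc (b/2+1) b).card : ℝ) * ((2:ℝ)^(-|α|) * (b:ℝ)^α)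
          ≤ ∑ k ∈ Finset.Icc (b/2+1) b, ((k:ℝ))^α := by
        have h2 := Finset.card_nsmul_le_sum (Finset.Icc (b/2+1) b) _ _ hterm
        rwa [nsmul_eq_mul] at h2
      have h2 : ∑ k ∈ Finset.Icc (b/2+1) b, ((k:ℝ))^α ≤ ∑ k ∈ Finset.Icc a b, ((k:ℝ))^α := by
        apply Finset.sum_le_sum_of_subset_of_nonneg hsub
        intro k _ _
        positivity
      have h3 : ((b:ℝ)/2) * ((2:ℝ)^(-|α|) * (b:ℝ)^α)
          ≤ ((Finset.Icc (b/2+1) b).card : ℝ) * ((2:ℝ)^(-|α|) * (b:ℝ)^α) := by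
        apply mul_le_mul_of_nonneg_right hcard
        positivity
      linarith
    have hSum2 : (2:ℝ)^(-(1+|α|)) * (b:ℝ)^(1+α) ≤ ∑ k ∈ Finset.Icc a b, ((k:ℝ))^α := by
      have h1 : (b:ℝ)^(1+α) = (b:ℝ) * (b:ℝ)^α := by
        rw [Real.rpow_add hb'0, Real.rpow_one]
      have h2 : (2:ℝ)^(-(1+|α|)) = (1/2) * (2:ℝ)^(-|α|) := by
        rw [show -(1+|α|) = (-1) + (-|α|) by ring, Real.rpow_add two_pos]
        norm_num [Real.rpow_neg_one]
      calc (2:ℝ)^(-(1+|α|)) * (b:ℝ)^(1+α) = ((b:ℝ)/2) * ((2:ℝ)^(-|α|) * (b:ℝ)^α) := by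
            rw [h1, h2]; ring
        _ ≤ _ := hSum1
    -- upper bound on LHS
    have hMb : max ((a:ℝ)^α) ((b:ℝ)^α) ≤ max 1 ((b:ℝ)^α) := by
      apply max_le _ (le_max_right _ _)
      rcases le_or_gt 0 α with hs | hs
      · exact le_trans (Real.rpow_le_rpow ha'0.le hab' hs) (le_max_right _ _)
      · exact le_trans (Real.rpow_le_one_of_one_le_of_nonpos ha'1 hs.le) (le_max_left _ _)
    have hlog : Real.log b - Real.log a ≤ (3/β) * (b:ℝ)^(β/3) := by
      have h1 : Real.log a ≥ 0 := Real.log_nonneg ha'1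
      have h2 : Real.log ((b:ℝ)^(β/3)) = (β/3) * Real.log b := Real.log_rpow hb'0 _
      have h3 : Real.log ((b:ℝ)^(β/3)) ≤ (b:ℝ)^(β/3) := by
        have := Real.log_le_sub_one_of_pos (Real.rpow_pos_of_pos hb'0 (β/3))
        linarith
      have h4 : Real.log b = (3/β) * Real.log ((b:ℝ)^(β/3)) := by
        rw [h2]; field_simp
      have h5 : (3/β) * Real.log ((b:ℝ)^(β/3)) ≤ (3/β) * (b:ℝ)^(β/3) := by
        apply mul_le_mul_of_nonneg_left h3 (by positivity)
      linarith
    have hcube : (Real.log b - Real.log a)^3 ≤ (3/β)^3 * (b:ℝ)^β := by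
      have h1 : ((3/β) * (b:ℝ)^(β/3))^3 = (3/β)^3 * ((b:ℝ)^(β/3))^(3:ℕ) := by
        rw [mul_pow]
      have h2 : ((b:ℝ)^(β/3))^(3:ℕ) = (b:ℝ)^β := by
        rw [← Real.rpow_natCast ((b:ℝ)^(β/3)) 3, ← Real.rpow_mul hb'0.le]
        norm_num
      calc (Real.log b - Real.log a)^3 ≤ ((3/β) * (b:ℝ)^(β/3))^3 :=
            pow_le_pow_left₀ hL0 hlog 3
        _ = (3/β)^3 * (b:ℝ)^β := by rw [h1, h2]
    have hmax1 : max 1 ((b:ℝ)^α) * (b:ℝ)^β ≤ (b:ℝ)^(1+α) := by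
      rcases le_or_gt 0 α with hs | hs
      · have hβ1 : β = 1 := min_eq_left (by linarith)
        have h1 : max 1 ((b:ℝ)^α) = (b:ℝ)^α :=
          max_eq_right (Real.one_le_rpow hb'1 hs)
        have hbb : (b:ℝ)^(1+α) = (b:ℝ) * (b:ℝ)^α := by
          rw [Real.rpow_add hb'0, Real.rpow_one]
        rw [hβ1, h1, Real.rpow_one, hbb, mul_comm]
      · have hβ1 : β = 1 + α := min_eq_right (by linarith)
        have h1 : max 1 ((b:ℝ)^α) = 1 :=
          max_eq_left (Real.rpow_le_one_of_one_le_of_nonpos hb'1 hs.le)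
        rw [hβ1, h1, one_mul]
    have hkey : max ((a:ℝ)^α) ((b:ℝ)^α) * (Real.log b - Real.log a)^3 ≤
        cB * ∑ k ∈ Finset.Icc a b, ((k:ℝ))^α := by
      have hmax10 : 0 ≤ max 1 ((b:ℝ)^α) := le_trans zero_le_one (le_max_left _ _)
      calc max ((a:ℝ)^α) ((b:ℝ)^α) * (Real.log b - Real.log a)^3
          ≤ max 1 ((b:ℝ)^α) * ((3/β)^3 * (b:ℝ)^β) := by
            apply mul_le_mul hMb hcube (by positivity) hmax10
        _ = (3/β)^3 * (max 1 ((b:ℝ)^α) * (b:ℝ)^β) := by ring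
        _ ≤ (3/β)^3 * (b:ℝ)^(1+α) := by
            apply mul_le_mul_of_nonneg_left hmax1 (by positivity)
        _ = cB * ((2:ℝ)^(-(1+|α|)) * (b:ℝ)^(1+α)) := by
            rw [hcB]
            have h2 : (2:ℝ)^(1+|α|) * (2:ℝ)^(-(1+|α|)) = 1 := by
              rw [← Real.rpow_add two_pos, show (1+|α|) + -(1+|α|) = (0:ℝ) by ring,
                Real.rpow_zero]
            calc (3/β)^3 * (b:ℝ)^(1+α)
                = (3/β)^3 * ((2:ℝ)^(1+|α|) * (2:ℝ)^(-(1+|α|))) * (b:ℝ)^(1+α) := by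
                  rw [h2]; ring
              _ = (3/β)^3 * (2:ℝ)^(1+|α|) * ((2:ℝ)^(-(1+|α|)) * (b:ℝ)^(1+α)) := by ring
        _ ≤ cB * ∑ k ∈ Finset.Icc a b, ((k:ℝ))^α := by
            apply mul_le_mul_of_nonneg_left hSum2 hcB0.le
    calc max ((a:ℝ)^α) ((b:ℝ)^α) * (Real.log b - Real.log a)^3
        ≤ cB * ∑ k ∈ Finset.Icc a b, ((k:ℝ))^α := hkey
      _ ≤ (cA + cB) * ∑ k ∈ Finset.Icc a b, ((k:ℝ))^α :=
          mul_le_mul_of_nonneg_right (by linarith) hSum0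

lemma rho_nonneg (α : ℝ) {d : ℕ} (x y : Fin d → ℤ) : 0 ≤ rho α x y := by
  rw [rho]
  split
  · exact le_refl 0
  · apply Real.sInf_nonneg
    rintro S ⟨m, z, _, _, _, rfl⟩
    exact Finset.sum_nonneg fun i _ => (nu_pos α _).le

/-- There is `c₁ > 0`, depending only on `α` and `d`, such that
for all `x, y ∈ ℤ^d`, `(max(ν_x, ν_y)) |log ν_x − log ν_y|³ ≤ c₁ ρ(x,y)`. -/
theorem log_nu_bound (d : ℕ) (hd : 1 ≤ d) (α : ℝ) (hα : -1 < α) :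
    ∃ c₁ : ℝ, 0 < c₁ ∧ ∀ x y : Fin d → ℤ,
      max (nu α x) (nu α y) * |Real.log (nu α x) - Real.log (nu α y)| ^ 3 ≤
        c₁ * rho α x y := by
  obtain ⟨c, hc0, hc⟩ := arith α hα
  refine ⟨(|α|^3 + 1) * c, mul_pos (by positivity) hc0, ?_⟩
  intro x y
  by_cases hxy : x = y
  · subst hxy
    rw [rho, if_pos rfl, sub_self, abs_zero, mul_zero]
    norm_num
  · have hrho := sum_le_rho α x y hxy
    have hrho0 := rho_nonneg α x y
    simp only [nu]
    set a := max (linf x) 1 with ha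
    set b := max (linf y) 1 with hb
    have ha1 : 1 ≤ a := le_max_right _ _
    have hb1 : 1 ≤ b := le_max_right _ _
    have ha0 : (0:ℝ) < (a:ℝ) := by exact_mod_cast Nat.lt_of_lt_of_le Nat.zero_lt_one ha1
    have hb0 : (0:ℝ) < (b:ℝ) := by exact_mod_cast Nat.lt_of_lt_of_le Nat.zero_lt_one hb1
    rw [Real.log_rpow ha0, Real.log_rpow hb0, ← mul_sub, abs_mul, mul_pow]
    have key : max ((a:ℝ)^α) ((b:ℝ)^α) * |Real.log (a:ℝ) - Real.log (b:ℝ)|^3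
        ≤ c * rho α x y := by
      rcases le_total a b with h | h
      · rw [min_eq_left h, max_eq_right h] at hrho
        have hab' : (a:ℝ) ≤ (b:ℝ) := by exact_mod_cast h
        have hlog := Real.log_le_log ha0 hab'
        have habs : |Real.log (a:ℝ) - Real.log (b:ℝ)| = Real.log (b:ℝ) - Real.log (a:ℝ) := by
          rw [abs_sub_comm]
          exact abs_of_nonneg (by linarith)
        rw [habs]
        exact le_trans (hc a b ha1 h) (mul_le_mul_of_nonneg_left hrho hc0.le)
      · rw [min_eq_right h, max_eq_left h] at hrho
        have hab' : (b:ℝ) ≤ (a:ℝ) := by exact_mod_cast h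
        have hlog := Real.log_le_log hb0 hab'
        have habs : |Real.log (a:ℝ) - Real.log (b:ℝ)| = Real.log (a:ℝ) - Real.log (b:ℝ) :=
          abs_of_nonneg (by linarith)
        rw [habs, max_comm]
        exact le_trans (hc b a hb1 h) (mul_le_mul_of_nonneg_left hrho hc0.le)
    have hR : 0 ≤ c * rho α x y := mul_nonneg hc0.le hrho0
    calc max ((a:ℝ)^α) ((b:ℝ)^α) * (|α|^3 * |Real.log (a:ℝ) - Real.log (b:ℝ)|^3)
        = |α|^3 * (max ((a:ℝ)^α) ((b:ℝ)^α) * |Real.log (a:ℝ) - Real.log (b:ℝ)|^3) := by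
          ring
      _ ≤ |α|^3 * (c * rho α x y) := mul_le_mul_of_nonneg_left key (by positivity)
      _ ≤ (|α|^3 + 1) * (c * rho α x y) :=
          mul_le_mul_of_nonneg_right (by linarith [pow_nonneg (abs_nonneg α) 3]) hR
      _ = (|α|^3 + 1) * c * rho α x y := by ring
end

section
/- Let α ∈ (−1, 0) and d ≥ 2. There exist constants c, c′ > 0, depending only on α and d, with the following property. For every real s ≥ 1 and every A > 0, define g : ℤ^d → ℝ by g(x) = A(s − |x|) if |x| ≤ s and g(x) = 0 otherwise. Then Σ_{x, y ∈ ℤ^d} (g(x) − g(y))² μ_{xy} ≤ c · A² · s^{d−α} and Σ_{x ∈ ℤ^d} g(x)² ν_x ≥ c′ · A² · s^{d+2+α}. -/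
open scoped BigOperators

/-!
On the box of radius `s/2` the tent `g` is at least `A s/2` and `ν ≥ s^α`, which gives the
lower bound from the `≍ s^d` points of that box. Across an edge `g` changes by at most `A`,
and only the `≍ s^d` edges inside the box of radius `s + 1` contribute, each with conductance
at most `(s + 1)^{-α}`; this gives the upper bound.
-/

namespace DirichletTest

variable {d : ℕ}

lemma linf_le_iff (x : Fin d → ℤ) (n : ℕ) : linf x ≤ n ↔ ∀ i, (x i).natAbs ≤ n := by
  simp [linf, Finset.sup_le_iff]

lemma linf_sub_comm (x y : Fin d → ℤ) : linf (x - y) = linf (y - x) := by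
  unfold linf
  congr 1
  funext i
  simp only [Pi.sub_apply]
  omega

lemma linf_le_add_linf_sub (x y : Fin d → ℤ) : linf x ≤ linf y + linf (x - y) := by
  rw [linf_le_iff]
  intro i
  have hy : (y i).natAbs ≤ linf y := Finset.le_sup (f := fun j => (y j).natAbs) (Finset.mem_univ i)
  have hxy : ((x - y) i).natAbs ≤ linf (x - y) :=
    Finset.le_sup (f := fun j => ((x - y) j).natAbs) (Finset.mem_univ i)
  simp only [Pi.sub_apply] at hxy
  omega

lemma abs_linf_sub_linf_le (x y : Fin d → ℤ) : |(linf x : ℝ) - linf y| ≤ linf (x - y) := by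
  have hx : (linf x : ℝ) ≤ linf y + linf (x - y) := by exact_mod_cast linf_le_add_linf_sub x y
  have hy : (linf y : ℝ) ≤ linf x + linf (x - y) := by
    exact_mod_cast linf_sub_comm x y ▸ linf_le_add_linf_sub y x
  exact abs_sub_le_iff.mpr ⟨by linarith, by linarith⟩

lemma linf_le_l1 (x : Fin d → ℤ) : linf x ≤ l1 x :=
  Finset.sup_le fun i _ =>
    Finset.single_le_sum (f := fun j => (x j).natAbs) (fun _ _ => Nat.zero_le _) (Finset.mem_univ i)

lemma linf_sub_le_one_of_l1_eq_one {x y : Fin d → ℤ} (h : l1 (x - y) = 1) :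
    linf (x - y) ≤ 1 :=
  h ▸ linf_le_l1 (x - y)

noncomputable def box (d n : ℕ) : Finset (Fin d → ℤ) :=
  Fintype.piFinset fun _ => Finset.Icc (-(n : ℤ)) n

lemma mem_box {n : ℕ} {x : Fin d → ℤ} : x ∈ box d n ↔ linf x ≤ n := by
  simp only [box, Fintype.mem_piFinset, Finset.mem_Icc, linf_le_iff]
  refine forall_congr' fun i => ?_
  omega

lemma card_box (d n : ℕ) : (box d n).card = (2 * n + 1) ^ d := by
  rw [box, Fintype.card_piFinset]
  have : ((n : ℤ) + 1 + n).toNat = 2 * n + 1 := by omega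
  simp [Int.card_Icc, sub_neg_eq_add, this]

lemma pow_le_card_box_floor {t : ℝ} (ht : 0 ≤ t) : t ^ d ≤ (box d ⌊t⌋₊).card := by
  rw [card_box]
  push_cast
  gcongr
  linarith [Nat.lt_floor_add_one t, (Nat.cast_nonneg ⌊t⌋₊ : (0 : ℝ) ≤ ⌊t⌋₊)]

lemma tsum_le_card_mul {ι : Type*} {f : ι → ℝ} {S : Finset ι} {B : ℝ}
    (hS : ∀ i ∉ S, f i = 0) (hB : ∀ i ∈ S, f i ≤ B) : ∑' i, f i ≤ S.card * B := by
  rw [tsum_eq_sum hS]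
  simpa using Finset.sum_le_card_nsmul S f B hB

lemma card_mul_le_tsum {ι : Type*} {f : ι → ℝ} {S : Finset ι} {B : ℝ} (hf : Summable f)
    (hf0 : ∀ i, 0 ≤ f i) (hB : ∀ i ∈ S, B ≤ f i) : S.card * B ≤ ∑' i, f i := by
  calc (S.card : ℝ) * B = S.card • B := (nsmul_eq_mul _ _).symm
    _ ≤ ∑ i ∈ S, f i := Finset.card_nsmul_le_sum S f B hB
    _ ≤ ∑' i, f i := hf.sum_le_tsum S fun i _ => hf0 i

lemma rpow_le_nu {α s : ℝ} (hα : α ≤ 0) (hs : 1 ≤ s) {x : Fin d → ℤ} (hx : (linf x : ℝ) ≤ s) :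
    s ^ α ≤ nu α x := by
  unfold nu
  apply Real.rpow_le_rpow_of_nonpos (by positivity) _ hα
  push_cast
  exact max_le hx hs

section Dirichlet

variable {f : (Fin d → ℤ) → ℝ} {n : ℕ} {A α : ℝ}

/-- Neighbouring values differ only if one point lies in `box d n`, so the conductance of a
contributing edge is at most `(n + 1)^{-α}`. -/
lemma sq_sub_mul_mu_le (hα : α ≤ 0) (hf : ∀ x, n < linf x → f x = 0)
    (hlip : ∀ x y, l1 (x - y) = 1 → |f x - f y| ≤ A) (x y : Fin d → ℤ) :
    (f x - f y) ^ 2 * mu α x y ≤ A ^ 2 * ((n + 1 : ℕ) : ℝ) ^ (-α) := by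
  unfold mu
  split_ifs with hxy
  · by_cases hfxy : f x = f y
    · rw [hfxy, sub_self, sq, zero_mul, zero_mul]
      positivity
    have hmax : max (linf x) (linf y) ≤ n + 1 := by
      have h1 := linf_le_add_linf_sub x y
      have h2 := linf_le_add_linf_sub y x
      have hxy' := linf_sub_le_one_of_l1_eq_one hxy
      rw [linf_sub_comm] at h2
      by_contra hlt
      exact hfxy (by rw [hf x (by omega), hf y (by omega)])
    have hsq : (f x - f y) ^ 2 ≤ A ^ 2 := sq_le_sq' (abs_le.mp (hlip x y hxy)).1
      (abs_le.mp (hlip x y hxy)).2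
    have hpow : ((max (linf x) (linf y) : ℕ) : ℝ) ^ (-α) ≤ ((n + 1 : ℕ) : ℝ) ^ (-α) :=
      Real.rpow_le_rpow (Nat.cast_nonneg _) (by exact_mod_cast hmax) (by linarith)
    exact mul_le_mul hsq hpow (by positivity) (sq_nonneg A)
  · rw [mul_zero]
    positivity

lemma tsum_sq_sub_mul_mu_eq_zero (hf : ∀ x, n < linf x → f x = 0) (α : ℝ) {x : Fin d → ℤ}
    (hx : x ∉ box d (n + 1)) : ∑' y, (f x - f y) ^ 2 * mu α x y = 0 := by
  have hx : n + 1 < linf x := by simpa [mem_box] using hx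
  have hterm : ∀ y, (f x - f y) ^ 2 * mu α x y = 0 := by
    intro y
    by_cases hxy : l1 (x - y) = 1
    · have h := linf_le_add_linf_sub x y
      have := linf_sub_le_one_of_l1_eq_one hxy
      rw [hf x (by omega), hf y (by omega), sub_self, sq, zero_mul, zero_mul]
    · rw [mu, if_neg hxy, mul_zero]
  simp only [hterm, tsum_zero]

lemma tsum_sq_sub_mul_mu_le (hα : α ≤ 0) (hf : ∀ x, n < linf x → f x = 0)
    (hlip : ∀ x y, l1 (x - y) = 1 → |f x - f y| ≤ A) (x : Fin d → ℤ) :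
    ∑' y, (f x - f y) ^ 2 * mu α x y ≤ 3 ^ d * (A ^ 2 * ((n + 1 : ℕ) : ℝ) ^ (-α)) := by
  have hnbr : ∀ y ∉ (box d 1).image (x + ·), (f x - f y) ^ 2 * mu α x y = 0 := by
    intro y hy
    have hxy : l1 (x - y) ≠ 1 := fun h => hy <| Finset.mem_image.mpr
      ⟨y - x, mem_box.mpr (linf_sub_comm x y ▸ linf_sub_le_one_of_l1_eq_one h), by abel⟩
    rw [mu, if_neg hxy, mul_zero]
  have hcard : (((box d 1).image (x + ·)).card : ℝ) ≤ 3 ^ d := by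
    exact_mod_cast Finset.card_image_le.trans (card_box d 1).le
  calc _ ≤ ((box d 1).image (x + ·)).card * (A ^ 2 * ((n + 1 : ℕ) : ℝ) ^ (-α)) :=
        tsum_le_card_mul hnbr fun y _ => sq_sub_mul_mu_le hα hf hlip x y
    _ ≤ 3 ^ d * (A ^ 2 * ((n + 1 : ℕ) : ℝ) ^ (-α)) := by gcongr

lemma dirichlet_form_le (hα : α ≤ 0) (hf : ∀ x, n < linf x → f x = 0)
    (hlip : ∀ x y, l1 (x - y) = 1 → |f x - f y| ≤ A) :
    ∑' x, ∑' y, (f x - f y) ^ 2 * mu α x y ≤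
      (2 * n + 3 : ℝ) ^ d * 3 ^ d * A ^ 2 * (n + 1 : ℝ) ^ (-α) := by
  calc _ ≤ (box d (n + 1)).card * (3 ^ d * (A ^ 2 * ((n + 1 : ℕ) : ℝ) ^ (-α))) :=
        tsum_le_card_mul (fun x hx => tsum_sq_sub_mul_mu_eq_zero hf α hx)
          fun x _ => tsum_sq_sub_mul_mu_le hα hf hlip x
    _ = _ := by
        rw [card_box]
        push_cast
        ring

end Dirichlet

section Tent

variable {A s : ℝ}

noncomputable def tent (A s : ℝ) (x : Fin d → ℤ) : ℝ :=
  if ((linf x : ℕ) : ℝ) ≤ s then A * (s - (linf x : ℝ)) else 0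

lemma tent_eq_mul_max (x : Fin d → ℤ) : tent A s x = A * max (s - linf x) 0 := by
  unfold tent
  split_ifs with hx
  · rw [max_eq_left (by linarith)]
  · rw [max_eq_right (by linarith), mul_zero]

lemma tent_eq_zero {x : Fin d → ℤ} (hx : s < linf x) : tent A s x = 0 :=
  if_neg hx.not_ge

lemma abs_tent_sub_tent_le (hA : 0 ≤ A) (x y : Fin d → ℤ) :
    |tent A s x - tent A s y| ≤ A * linf (x - y) := by
  rw [tent_eq_mul_max, tent_eq_mul_max, ← mul_sub, abs_mul, abs_of_nonneg hA]
  gcongr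
  refine (abs_max_sub_max_le_abs _ _ 0).trans ?_
  rw [sub_sub_sub_cancel_left, abs_sub_comm]
  exact abs_linf_sub_linf_le x y

lemma le_tent (hA : 0 ≤ A) {x : Fin d → ℤ} (hx : (linf x : ℝ) ≤ s / 2) :
    A * (s / 2) ≤ tent A s x := by
  rw [tent, if_pos (by linarith)]
  gcongr
  linarith

lemma dirichlet_form_tent_le {α : ℝ} (hα : α ≤ 0) (hs : 1 ≤ s) (hA : 0 ≤ A) :
    ∑' x : Fin d → ℤ, ∑' y, (tent A s x - tent A s y) ^ 2 * mu α x y ≤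
      15 ^ d * 2 ^ (-α) * A ^ 2 * s ^ ((d : ℝ) - α) := by
  have hn : (⌊s⌋₊ : ℝ) ≤ s := Nat.floor_le (by linarith)
  have hlip : ∀ x y : Fin d → ℤ, l1 (x - y) = 1 → |tent A s x - tent A s y| ≤ A := by
    intro x y hxy
    refine (abs_tent_sub_tent_le hA x y).trans (mul_le_of_le_one_right hA ?_)
    exact_mod_cast linf_sub_le_one_of_l1_eq_one hxy
  calc _ ≤ (2 * ⌊s⌋₊ + 3 : ℝ) ^ d * 3 ^ d * A ^ 2 * (⌊s⌋₊ + 1 : ℝ) ^ (-α) :=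
        dirichlet_form_le hα (fun x hx => tent_eq_zero ((Nat.floor_lt (by linarith)).mp hx)) hlip
    _ ≤ (5 * s) ^ d * 3 ^ d * A ^ 2 * (2 * s) ^ (-α) := by
        gcongr
        · linarith
        · linarith
        · linarith
    _ = _ := by
        rw [Real.mul_rpow (by norm_num) (by linarith), sub_eq_add_neg,
          Real.rpow_add (by linarith), Real.rpow_natCast, mul_pow,
          show (15 : ℝ) ^ d = 5 ^ d * 3 ^ d by rw [← mul_pow]; norm_num]
        ring

lemma le_energy_tent {α : ℝ} (hα : α ≤ 0) (hs : 1 ≤ s) (hA : 0 ≤ A) :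
    1 / 2 ^ (d + 2) * A ^ 2 * s ^ ((d : ℝ) + 2 + α) ≤
      ∑' x : Fin d → ℤ, tent A s x ^ 2 * nu α x := by
  have hsum : Summable fun x : Fin d → ℤ => tent A s x ^ 2 * nu α x := by
    refine summable_of_ne_finset_zero (s := box d ⌊s⌋₊) fun x hx => ?_
    have hx : ⌊s⌋₊ < linf x := by simpa [mem_box] using hx
    rw [tent_eq_zero ((Nat.floor_lt (by linarith)).mp hx), sq, zero_mul, zero_mul]
  have hterm : ∀ x ∈ box d ⌊s / 2⌋₊, (A * (s / 2)) ^ 2 * s ^ α ≤ tent A s x ^ 2 * nu α x := by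
    intro x hx
    have hx : (linf x : ℝ) ≤ s / 2 :=
      (Nat.cast_le.mpr (mem_box.mp hx)).trans (Nat.floor_le (by linarith))
    have htent := le_tent hA hx
    exact mul_le_mul (by gcongr) (rpow_le_nu hα hs (by linarith)) (by positivity)
      (sq_nonneg _)
  calc _ = (s / 2) ^ d * ((A * (s / 2)) ^ 2 * s ^ α) := by
        rw [show (d : ℝ) + 2 + α = ((d + 2 : ℕ) : ℝ) + α by push_cast; ring,
          Real.rpow_add (by linarith), Real.rpow_natCast, div_pow, pow_add]
        ring
    _ ≤ (box d ⌊s / 2⌋₊).card * ((A * (s / 2)) ^ 2 * s ^ α) := by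
        gcongr
        exact pow_le_card_box_floor (by linarith)
    _ ≤ _ := card_mul_le_tsum hsum
        (fun x => mul_nonneg (sq_nonneg _) (Real.rpow_nonneg (Nat.cast_nonneg _) _)) hterm

end Tent

end DirichletTest

open DirichletTest

theorem dirichlet_test_function_general (d : ℕ) (α : ℝ) (hα₂ : α < 0) :
    ∃ c c' : ℝ, 0 < c ∧ 0 < c' ∧
      ∀ s : ℝ, 1 ≤ s → ∀ A : ℝ, 0 < A →
        ∀ g : (Fin d → ℤ) → ℝ,
          (∀ x, g x = if ((linf x : ℕ) : ℝ) ≤ s then A * (s - (linf x : ℝ)) else 0) →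
          (∑' x : Fin d → ℤ, ∑' y : Fin d → ℤ, (g x - g y) ^ 2 * mu α x y) ≤
              c * A ^ 2 * s ^ ((d : ℝ) - α) ∧
            c' * A ^ 2 * s ^ ((d : ℝ) + 2 + α) ≤
              ∑' x : Fin d → ℤ, g x ^ 2 * nu α x := by
  refine ⟨15 ^ d * 2 ^ (-α), 1 / 2 ^ (d + 2), by positivity, by positivity, ?_⟩
  intro s hs A hA g hg
  obtain rfl : g = tent A s := funext hg
  exact ⟨dirichlet_form_tent_le hα₂.le hs hA.le, le_energy_tent hα₂.le hs hA.le⟩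

/-- Let `α ∈ (−1,0)` and `d ≥ 2`. There are `c, c′ > 0`, depending
only on `α` and `d`, such that for every real `s ≥ 1` and every `A > 0`, the function
`g(x) = A(s − |x|)` for `|x| ≤ s` and `g(x) = 0` otherwise satisfies
`∑_{x,y} (g(x) − g(y))² μ_{xy} ≤ c A² s^{d−α}` and
`∑_x g(x)² ν_x ≥ c′ A² s^{d+2+α}`. -/
theorem dirichlet_test_function (d : ℕ) (hd : 2 ≤ d) (α : ℝ)
    (hα₁ : -1 < α) (hα₂ : α < 0) :
    ∃ c c' : ℝ, 0 < c ∧ 0 < c' ∧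
      ∀ s : ℝ, 1 ≤ s → ∀ A : ℝ, 0 < A →
        ∀ g : (Fin d → ℤ) → ℝ,
          (∀ x, g x = if ((linf x : ℕ) : ℝ) ≤ s then A * (s - (linf x : ℝ)) else 0) →
          (∑' x : Fin d → ℤ, ∑' y : Fin d → ℤ, (g x - g y) ^ 2 * mu α x y) ≤
              c * A ^ 2 * s ^ ((d : ℝ) - α) ∧
            c' * A ^ 2 * s ^ ((d : ℝ) + 2 + α) ≤
              ∑' x : Fin d → ℤ, g x ^ 2 * nu α x :=
  dirichlet_test_function_general d α hα₂
end
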